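/- arXiv:1601.02358 — 3 statements merged into one kernel-verified Lean document; each statement's English description precedes it below -/
import Mathlib

section
/- Let c : [0,1] → ℝⁿ be a smooth immersion and h, k smooth vector fields along c. Then ⟨h(0),k(0)⟩ + ∫₀¹ ( ⟨D_ℓ h^N, D_ℓ k^N⟩ + (1/4)⟨D_ℓ h^T, D_ℓ k^T⟩ ) ‖c'(t)‖ dt = ⟨h(0),k(0)⟩ + ∫₀¹ ⟨D_cR(h)(t), D_cR(k)(t)⟩ dt, where D_cR(h) is the differential of the SRVF. That is, the elastic first-order Sobolev metric with weights a=1, b=1/2 plus the origin term is the pullback of the metric (ξ,η) ↦ ⟨ξ(0)_H, η(0)_H⟩ + ∫⟨ξ_V, η_V⟩ dt under R. -/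
noncomputable section

/-- Unit tangent field `v = c'/‖c'‖`. -/
def unitTangent (n : ℕ) (c : ℝ → EuclideanSpace ℝ (Fin n)) (t : ℝ) :
    EuclideanSpace ℝ (Fin n) := ‖deriv c t‖⁻¹ • deriv c t

/-- Arc-length derivative `D_ℓ h = h'/‖c'‖`. -/
def arcDeriv (n : ℕ) (c h : ℝ → EuclideanSpace ℝ (Fin n)) (t : ℝ) :
    EuclideanSpace ℝ (Fin n) := ‖deriv c t‖⁻¹ • deriv h t

/-- Tangential component `w^T = ⟨w,v⟩v` of the arc-length derivative. -/
def arcDerivT (n : ℕ) (c h : ℝ → EuclideanSpace ℝ (Fin n)) (t : ℝ) :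
    EuclideanSpace ℝ (Fin n) :=
  (inner ℝ (arcDeriv n c h t) (unitTangent n c t) : ℝ) • unitTangent n c t

/-- Normal component `w^N = w − w^T` of the arc-length derivative. -/
def arcDerivN (n : ℕ) (c h : ℝ → EuclideanSpace ℝ (Fin n)) (t : ℝ) :
    EuclideanSpace ℝ (Fin n) := arcDeriv n c h t - arcDerivT n c h t

/-- Differential of the SRVF (vertical projection, flat case):
`D_cR(h) = ‖c'‖^{1/2} ((D_ℓ h)^N + (1/2)⟨D_ℓ h, v⟩ v)`. -/
def srvfDiff (n : ℕ) (c h : ℝ → EuclideanSpace ℝ (Fin n)) (t : ℝ) :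
    EuclideanSpace ℝ (Fin n) :=
  Real.sqrt ‖deriv c t‖ •
    (arcDerivN n c h t
      + ((1 : ℝ)/2 * (inner ℝ (arcDeriv n c h t) (unitTangent n c t) : ℝ)) • unitTangent n c t)

lemma inner_N_T_zero (n : ℕ) (c h k : ℝ → EuclideanSpace ℝ (Fin n)) (t : ℝ) :
    (inner ℝ (arcDerivN n c h t) (arcDerivT n c k t) : ℝ) = 0 := by
  by_cases hz : deriv c t = 0
  · simp [arcDerivT, unitTangent, hz]
  · have hn : ‖unitTangent n c t‖ = 1 := by
      rw [unitTangent, norm_smul, norm_inv, norm_norm,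
        inv_mul_cancel₀ (norm_ne_zero_iff.mpr hz)]
    have hv : (inner ℝ (unitTangent n c t) (unitTangent n c t) : ℝ) = 1 := by
      rw [real_inner_self_eq_norm_mul_norm, hn]; ring
    simp only [arcDerivN, arcDerivT, inner_sub_left, real_inner_smul_left,
      real_inner_smul_right, hv]
    ring

lemma srvf_inner (n : ℕ) (c h k : ℝ → EuclideanSpace ℝ (Fin n)) (t : ℝ) :
    (inner ℝ (srvfDiff n c h t) (srvfDiff n c k t) : ℝ)
      = ((inner ℝ (arcDerivN n c h t) (arcDerivN n c k t) : ℝ)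
          + (1 : ℝ)/4 * (inner ℝ (arcDerivT n c h t) (arcDerivT n c k t) : ℝ))
        * ‖deriv c t‖ := by
  have h1 : (inner ℝ (arcDerivN n c k t) (arcDerivT n c h t) : ℝ) = 0 :=
    inner_N_T_zero n c k h t
  have h2 : (inner ℝ (arcDerivN n c h t) (arcDerivT n c k t) : ℝ) = 0 :=
    inner_N_T_zero n c h k t
  have hTh : ((1 : ℝ)/2 * (inner ℝ (arcDeriv n c h t) (unitTangent n c t) : ℝ))
      • unitTangent n c t = ((1:ℝ)/2) • arcDerivT n c h t := by
    simp [arcDerivT, smul_smul]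
  have hTk : ((1 : ℝ)/2 * (inner ℝ (arcDeriv n c k t) (unitTangent n c t) : ℝ))
      • unitTangent n c t = ((1:ℝ)/2) • arcDerivT n c k t := by
    simp [arcDerivT, smul_smul]
  have hs : Real.sqrt ‖deriv c t‖ * Real.sqrt ‖deriv c t‖ = ‖deriv c t‖ :=
    Real.mul_self_sqrt (norm_nonneg _)
  simp only [srvfDiff, hTh, hTk, real_inner_smul_left, real_inner_smul_right,
    inner_add_left, inner_add_right, real_inner_comm (arcDerivT n c h t)]
  rw [real_inner_comm (arcDerivT n c h t) (arcDerivN n c k t)] at h1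
  rw [h1, h2]
  ring_nf
  rw [sq, hs]
  ring

/-- the elastic first-order Sobolev metric with weights `a = 1`, `b = 1/2`
together with the origin term is the pullback under the SRVF `R` of the metric
`(ξ,η) ↦ ⟨ξ(0)_H, η(0)_H⟩ + ∫ ⟨ξ_V, η_V⟩ dt` on the tangent bundle. -/
theorem elastic_metric_is_pullback (n : ℕ) (c h k : ℝ → EuclideanSpace ℝ (Fin n))
    (hc : ContDiff ℝ (⊤ : ℕ∞) c) (hh : ContDiff ℝ (⊤ : ℕ∞) h) (hk : ContDiff ℝ (⊤ : ℕ∞) k)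
    (himm : ∀ t ∈ Set.Icc (0 : ℝ) 1, deriv c t ≠ 0) :
    (inner ℝ (h 0) (k 0) : ℝ)
      + ∫ t in (0:ℝ)..1,
          ((inner ℝ (arcDerivN n c h t) (arcDerivN n c k t) : ℝ)
            + (1 : ℝ)/4 * (inner ℝ (arcDerivT n c h t) (arcDerivT n c k t) : ℝ)) * ‖deriv c t‖
    = (inner ℝ (h 0) (k 0) : ℝ)
      + ∫ t in (0:ℝ)..1, (inner ℝ (srvfDiff n c h t) (srvfDiff n c k t) : ℝ) := by
  congr 1
  apply intervalIntegral.integral_congr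
  intro t _
  exact (srvf_inner n c h k t).symm

end
end

section
/- Let c : [0,1] → ℝⁿ be a smooth immersion, and φ : [0,1] → [0,1] an increasing diffeomorphism fixing endpoints. For smooth vector fields h, k along c, the metric G_c(h,k) = ⟨h(0),k(0)⟩ + ∫₀¹ (⟨D_ℓ h^N, D_ℓ k^N⟩ + (1/4)⟨D_ℓ h^T, D_ℓ k^T⟩) ‖c'‖ dt satisfies the equivariance property G_{c∘φ}(h∘φ, k∘φ) = G_c(h,k). -/
noncomputable section

/-- The elastic metric `G_c(h,k)` of the paper (weights `a = 1`, `b = 1/2`),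
with the origin term. -/
def elasticG (n : ℕ) (c h k : ℝ → EuclideanSpace ℝ (Fin n)) : ℝ :=
  (inner ℝ (h 0) (k 0) : ℝ)
    + ∫ t in (0:ℝ)..1,
        ((inner ℝ (arcDerivN n c h t) (arcDerivN n c k t) : ℝ)
          + (1 : ℝ)/4 * (inner ℝ (arcDerivT n c h t) (arcDerivT n c k t) : ℝ)) * ‖deriv c t‖

lemma deriv_comp_eq (n : ℕ) (c : ℝ → EuclideanSpace ℝ (Fin n)) (φ : ℝ → ℝ)
    (hc : ContDiff ℝ (⊤ : ℕ∞) c) (hφ : ContDiff ℝ (⊤ : ℕ∞) φ) (t : ℝ) :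
    deriv (c ∘ φ) t = deriv φ t • deriv c (φ t) := by
  have h1 : HasDerivAt φ (deriv φ t) t :=
    (hφ.differentiable (by simp) t).hasDerivAt
  have h2 : HasDerivAt c (deriv c (φ t)) (φ t) :=
    (hc.differentiable (by simp) (φ t)).hasDerivAt
  exact (h2.scomp t h1).deriv

/-- the metric `G` satisfies the equivariance (reparametrization invariance)
property `G_{c∘φ}(h∘φ, k∘φ) = G_c(h,k)` for every increasing diffeomorphism `φ` of `[0,1]`. -/
theorem elasticG_reparametrization_invariant (n : ℕ)
    (c h k : ℝ → EuclideanSpace ℝ (Fin n)) (φ : ℝ → ℝ)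
    (hc : ContDiff ℝ (⊤ : ℕ∞) c) (hh : ContDiff ℝ (⊤ : ℕ∞) h) (hk : ContDiff ℝ (⊤ : ℕ∞) k)
    (himm : ∀ t ∈ Set.Icc (0 : ℝ) 1, deriv c t ≠ 0)
    (hφ : ContDiff ℝ (⊤ : ℕ∞) φ)
    (hφ' : ∀ t ∈ Set.Icc (0 : ℝ) 1, 0 < deriv φ t)
    (hφmap : Set.MapsTo φ (Set.Icc (0 : ℝ) 1) (Set.Icc (0 : ℝ) 1))
    (hφ0 : φ 0 = 0) (hφ1 : φ 1 = 1) :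
    elasticG n (c ∘ φ) (h ∘ φ) (k ∘ φ) = elasticG n c h k := by
  -- the integrand for the original curve
  set g : ℝ → ℝ := fun t =>
      ((inner ℝ (arcDerivN n c h t) (arcDerivN n c k t) : ℝ)
        + (1 : ℝ)/4 * (inner ℝ (arcDerivT n c h t) (arcDerivT n c k t) : ℝ)) * ‖deriv c t‖
    with hg_def
  -- pointwise pull-back identities on [0,1]
  have key : ∀ t ∈ Set.uIcc (0:ℝ) 1,
      ((inner ℝ (arcDerivN n (c ∘ φ) (h ∘ φ) t) (arcDerivN n (c ∘ φ) (k ∘ φ) t) : ℝ)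
        + (1 : ℝ)/4 *
          (inner ℝ (arcDerivT n (c ∘ φ) (h ∘ φ) t) (arcDerivT n (c ∘ φ) (k ∘ φ) t) : ℝ))
        * ‖deriv (c ∘ φ) t‖ = deriv φ t • (g ∘ φ) t := by
    intro t ht
    rw [Set.uIcc_of_le (by norm_num : (0:ℝ) ≤ 1)] at ht
    have hpos := hφ' t ht
    have hφt := hφmap ht
    have hcne := himm (φ t) hφt
    have hcφ := deriv_comp_eq n c φ hc hφ t
    have hhφ := deriv_comp_eq n h φ hh hφ t
    have hkφ := deriv_comp_eq n k φ hk hφ t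
    have hnorm : ‖deriv (c ∘ φ) t‖ = deriv φ t * ‖deriv c (φ t)‖ := by
      rw [hcφ, norm_smul, Real.norm_eq_abs, abs_of_pos hpos]
    have hinv : ‖deriv (c ∘ φ) t‖⁻¹ = (deriv φ t)⁻¹ * ‖deriv c (φ t)‖⁻¹ := by
      rw [hnorm, mul_inv]
    have hut : unitTangent n (c ∘ φ) t = unitTangent n c (φ t) := by
      rw [unitTangent, unitTangent, hinv, hcφ, smul_smul]
      congr 1
      rw [mul_comm ((deriv φ t)⁻¹) _, mul_assoc, inv_mul_cancel₀ hpos.ne', mul_one]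
    have had : ∀ f : ℝ → EuclideanSpace ℝ (Fin n),
        deriv (f ∘ φ) t = deriv φ t • deriv f (φ t) →
        arcDeriv n (c ∘ φ) (f ∘ φ) t = arcDeriv n c f (φ t) := by
      intro f hf
      rw [arcDeriv, arcDeriv, hinv, hf, smul_smul]
      congr 1
      rw [mul_comm ((deriv φ t)⁻¹) _, mul_assoc, inv_mul_cancel₀ hpos.ne', mul_one]
    have hadh := had h hhφ
    have hadk := had k hkφ
    have hadTh : arcDerivT n (c ∘ φ) (h ∘ φ) t = arcDerivT n c h (φ t) := by
      rw [arcDerivT, arcDerivT, hut, hadh]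
    have hadTk : arcDerivT n (c ∘ φ) (k ∘ φ) t = arcDerivT n c k (φ t) := by
      rw [arcDerivT, arcDerivT, hut, hadk]
    have hadNh : arcDerivN n (c ∘ φ) (h ∘ φ) t = arcDerivN n c h (φ t) := by
      rw [arcDerivN, arcDerivN, hadTh, hadh]
    have hadNk : arcDerivN n (c ∘ φ) (k ∘ φ) t = arcDerivN n c k (φ t) := by
      rw [arcDerivN, arcDerivN, hadTk, hadk]
    rw [hadNh, hadNk, hadTh, hadTk, hnorm]
    simp only [hg_def, Function.comp_apply, smul_eq_mul]
    ring
  -- continuity of g on [0,1]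
  have hcont_dc : Continuous (deriv c) := hc.continuous_deriv (by simp)
  have hcont_dh : Continuous (deriv h) := hh.continuous_deriv (by simp)
  have hcont_dk : Continuous (deriv k) := hk.continuous_deriv (by simp)
  have hninv : ContinuousOn (fun t => ‖deriv c t‖⁻¹) (Set.Icc (0:ℝ) 1) :=
    (hcont_dc.norm.continuousOn).inv₀ (fun t ht => norm_ne_zero_iff.mpr (himm t ht))
  have hut_cont : ContinuousOn (unitTangent n c) (Set.Icc (0:ℝ) 1) :=
    hninv.smul hcont_dc.continuousOn
  have had_cont : ∀ f : ℝ → EuclideanSpace ℝ (Fin n), Continuous (deriv f) →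
      ContinuousOn (arcDeriv n c f) (Set.Icc (0:ℝ) 1) := fun f hf =>
    hninv.smul hf.continuousOn
  have hadT_cont : ∀ f : ℝ → EuclideanSpace ℝ (Fin n), Continuous (deriv f) →
      ContinuousOn (arcDerivT n c f) (Set.Icc (0:ℝ) 1) := fun f hf =>
    (((had_cont f hf).inner (𝕜 := ℝ) hut_cont)).smul hut_cont
  have hadN_cont : ∀ f : ℝ → EuclideanSpace ℝ (Fin n), Continuous (deriv f) →
      ContinuousOn (arcDerivN n c f) (Set.Icc (0:ℝ) 1) := fun f hf =>
    (had_cont f hf).sub (hadT_cont f hf)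
  have hg_cont : ContinuousOn g (Set.Icc (0:ℝ) 1) := by
    apply ContinuousOn.mul
    · exact (((hadN_cont h hcont_dh).inner (hadN_cont k hcont_dk))).add
        (continuousOn_const.mul
          (((hadT_cont h hcont_dh).inner (hadT_cont k hcont_dk))))
    · exact hcont_dc.norm.continuousOn
  -- change of variables
  have himg : φ '' Set.uIcc (0:ℝ) 1 ⊆ Set.Icc (0:ℝ) 1 := by
    rw [Set.uIcc_of_le (by norm_num : (0:ℝ) ≤ 1)]
    exact Set.image_subset_iff.mpr hφmap
  have hφderiv : ∀ x ∈ Set.uIcc (0:ℝ) 1, HasDerivAt φ (deriv φ x) x := fun x _ =>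
    (hφ.differentiable (by simp) x).hasDerivAt
  have hφ'cont : ContinuousOn (deriv φ) (Set.uIcc (0:ℝ) 1) :=
    (hφ.continuous_deriv (by simp)).continuousOn
  have subst := intervalIntegral.integral_comp_smul_deriv' (a := 0) (b := 1)
    hφderiv hφ'cont (hg_cont.mono himg)
  unfold elasticG
  rw [Function.comp_apply, Function.comp_apply, hφ0]
  congr 1
  rw [intervalIntegral.integral_congr key, subst, hφ0, hφ1]

end
end

section
/- Let γ(t) = x(t) + iy(t) be a smooth curve in the hyperbolic half-plane ℍ and u₀ a tangent vector at γ(t₀). Then the parallel transport of u₀ along γ from t₀ to t is u(t) = (y(t)/y(t₀)) · R(−θ(t₀,t)) u₀, where R(α) is the rotation matrix by angle α acting on (u₁,u₂) and θ(t₀,t) = ∫_{t₀}^{t} x'(τ)/y(τ) dτ. That is, the solution of ∇_{γ'(t)}u(t) = 0 with u(t₀) = u₀ is given by this formula. -/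
/-!
Writing `u = u₁ + i u₂`, the transport equation is the scalar linear equation `u' = a u` with
`a = (y' − i x')/y`. Its coefficient has the primitive `log y − i θ`, so
`u(t) = exp (log y(t) − log y(t₀) − i θ) u(t₀) = (y(t)/y(t₀)) e^{−iθ} u(t₀)`, and multiplication
by `e^{−iθ}` is the rotation `R(−θ)` of `(u₁, u₂)`.
-/

open Complex

theorem eq_exp_sub_mul_of_hasDerivAt {f A a : ℝ → ℂ}
    (hf : ∀ t, HasDerivAt f (a t * f t) t) (hA : ∀ t, HasDerivAt A (a t) t) (t₀ t : ℝ) :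
    f t = exp (A t - A t₀) * f t₀ := by
  have hconst : ∀ s, HasDerivAt (fun s => exp (-A s) * f s) 0 s := fun s =>
    ((hA s).neg.cexp.mul (hf s)).congr_deriv (by ring)
  have hinv : exp (-A t) * f t = exp (-A t₀) * f t₀ :=
    is_const_of_deriv_eq_zero (fun s => (hconst s).differentiableAt)
      (fun s => (hconst s).deriv) t t₀
  calc f t = exp (A t) * (exp (-A t) * f t) := by
        rw [← mul_assoc, ← exp_add, add_neg_cancel, exp_zero, one_mul]
    _ = exp (A t - A t₀) * f t₀ := by
        rw [hinv, ← mul_assoc, ← exp_add, sub_eq_add_neg]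

theorem hasDerivAt_parallelTransport {x y u₁ u₂ : ℝ → ℝ}
    (hu₁ : Differentiable ℝ u₁) (hu₂ : Differentiable ℝ u₂) (hy : ∀ t, y t ≠ 0)
    (hode₁ : ∀ t, deriv u₁ t = (deriv x t * u₂ t + deriv y t * u₁ t) / y t)
    (hode₂ : ∀ t, deriv u₂ t = (deriv y t * u₂ t - deriv x t * u₁ t) / y t) (t : ℝ) :
    HasDerivAt (fun t => (u₁ t : ℂ) + u₂ t * I)
      ((deriv y t - deriv x t * I) / y t * (u₁ t + u₂ t * I)) t := by
  refine ((hu₁ t).hasDerivAt.ofReal_comp.add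
    ((hu₂ t).hasDerivAt.ofReal_comp.mul_const I)).congr_deriv ?_
  have : (y t : ℂ) ≠ 0 := ofReal_ne_zero.mpr (hy t)
  rw [hode₁, hode₂]
  push_cast
  field_simp
  linear_combination (deriv x t * u₂ t : ℂ) * I_sq

theorem hasDerivAt_log_sub_integral_mul_I {x y : ℝ → ℝ}
    (hx : Continuous (deriv x)) (hy : Differentiable ℝ y) (hy₀ : ∀ t, y t ≠ 0) (t₀ t : ℝ) :
    HasDerivAt (fun t => (Real.log (y t) : ℂ) - (∫ τ in t₀..t, deriv x τ / y τ : ℝ) * I)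
      ((deriv y t - deriv x t * I) / y t) t := by
  have hlog := ((hy t).hasDerivAt.log (hy₀ t)).ofReal_comp
  have hθ := ((hx.div hy.continuous hy₀).integral_hasStrictDerivAt t₀ t).hasDerivAt.ofReal_comp
  refine (hlog.sub (hθ.mul_const I)).congr_deriv ?_
  rw [Pi.div_apply]
  push_cast
  ring

theorem exp_log_sub_log_sub_mul_I {a b : ℝ} (ha : 0 < a) (hb : 0 < b) (θ : ℝ) :
    exp ((Real.log a : ℂ) - θ * I - Real.log b) = (a / b : ℝ) * (Real.cos θ - Real.sin θ * I) := by
  rw [sub_right_comm, ← ofReal_sub, ← Real.log_div ha.ne' hb.ne', sub_eq_add_neg, exp_add,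
    ← ofReal_exp, Real.exp_log (div_pos ha hb), ← neg_mul, ← ofReal_neg, exp_mul_I, ← ofReal_cos,
    ← ofReal_sin, Real.cos_neg, Real.sin_neg, ofReal_neg]
  ring

/-- parallel transport in the hyperbolic half-plane. If `u = u₁ + iu₂` solves
`∇_{γ'}u = 0` along `γ = x + iy`, i.e. `u₁' = (x'u₂ + y'u₁)/y` and `u₂' = (y'u₂ − x'u₁)/y`,
with initial value `u(t₀)`, then
`u(t) = (y(t)/y(t₀)) · [[cos θ, sin θ],[−sin θ, cos θ]] u(t₀)`
where `θ = θ(t₀,t) = ∫_{t₀}^t x'(τ)/y(τ) dτ`. -/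
theorem hyperbolic_parallel_transport
    (x y u₁ u₂ : ℝ → ℝ) (t₀ : ℝ)
    (hx : ContDiff ℝ 1 x) (hy : ContDiff ℝ 1 y)
    (hu₁ : Differentiable ℝ u₁) (hu₂ : Differentiable ℝ u₂)
    (hypos : ∀ t, 0 < y t)
    -- the parallel transport ODE ∇_{γ'}u = 0
    (hode₁ : ∀ t, deriv u₁ t = (deriv x t * u₂ t + deriv y t * u₁ t) / y t)
    (hode₂ : ∀ t, deriv u₂ t = (deriv y t * u₂ t - deriv x t * u₁ t) / y t) :
    ∀ t : ℝ,
      u₁ t = (y t / y t₀) *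
          (Real.cos (∫ τ in t₀..t, deriv x τ / y τ) * u₁ t₀
            + Real.sin (∫ τ in t₀..t, deriv x τ / y τ) * u₂ t₀) ∧
      u₂ t = (y t / y t₀) *
          (- Real.sin (∫ τ in t₀..t, deriv x τ / y τ) * u₁ t₀
            + Real.cos (∫ τ in t₀..t, deriv x τ / y τ) * u₂ t₀) := by
  intro t
  have hy₀ : ∀ t, y t ≠ 0 := fun t => (hypos t).ne'
  have hsol := eq_exp_sub_mul_of_hasDerivAt
    (hasDerivAt_parallelTransport hu₁ hu₂ hy₀ hode₁ hode₂)
    (hasDerivAt_log_sub_integral_mul_I hx.continuous_deriv_one (hy.differentiable one_ne_zero)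
      hy₀ t₀) t₀ t
  simp only [intervalIntegral.integral_same, ofReal_zero, zero_mul, sub_zero] at hsol
  rw [exp_log_sub_log_sub_mul_I (hypos t) (hypos t₀)] at hsol
  constructor
  · simpa [← ofReal_cos, ← ofReal_sin, mul_add, mul_comm, mul_left_comm] using congrArg re hsol
  · simpa [← ofReal_cos, ← ofReal_sin, mul_add, mul_comm, mul_left_comm] using congrArg im hsol
end
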